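/- arXiv:2408.05012 — 5 statements merged into one kernel-verified Lean document; each statement's English description precedes it below -/
import Mathlib

section
/- Sequential composition preserves membership in the computational domain: if D and E are prefix-closed and total sets of runs, then D ⋉ E := D_⊥ ∪ (D ▷ E) is again prefix-closed and total. -/
abbrev Event : Type := ℕ × ℝ × ℝ
abbrev Trace : Type := List Event

abbrev Run (S : Type*) : Type _ := S × Trace × Option S

/-- The lifted prefix order on trace–outcome pairs. -/
def prefixOrd {S : Type*} (a b : Trace × Option S) : Prop :=
  a = b ∨ (a.1 <+: b.1 ∧ a.2 = none)

/-- A set of runs is prefix-closed if it is downward closed under the lifted prefix order. -/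
def PrefixClosed {S : Type*} (D : Set (Run S)) : Prop :=
  ∀ v τ w, (v, τ, w) ∈ D → ∀ τ' w', prefixOrd (τ', w') (τ, w) → (v, τ', w') ∈ D

/-- A set of runs is total if computation can start from every state. -/
def TotalRuns {S : Type*} (D : Set (Run S)) : Prop :=
  ∀ v : S, (v, ([] : Trace), (none : Option S)) ∈ D

/-- Lowering: forget final states, keeping unfinished runs. -/
def lower {S : Type*} (D : Set (Run S)) : Set (Run S) :=
  {r | ∃ w, (r.1, r.2.1, w) ∈ D ∧ r.2.2 = none}

/-- Continuation of runs. -/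
def cont {S : Type*} (D E : Set (Run S)) : Set (Run S) :=
  {r | ∃ τ₁ τ₂ u, r.2.1 = τ₁ ++ τ₂ ∧ (r.1, τ₁, some u) ∈ D ∧ (u, τ₂, r.2.2) ∈ E}

/-- Sequential composition of run sets. -/
def seqComp {S : Type*} (D E : Set (Run S)) : Set (Run S) := lower D ∪ cont D E

/-- The neutral element ιₚ = ⊥ₚ ∪ Id. -/
def idP (S : Type*) : Set (Run S) :=
  {r | r.2.1 = [] ∧ (r.2.2 = none ∨ r.2.2 = some r.1)}

/-- Semantic iteration. -/
def iterRuns {S : Type*} (D : Set (Run S)) : ℕ → Set (Run S)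
  | 0 => idP S
  | n + 1 => seqComp D (iterRuns D n)

/-- Kleene starRuns of a run set. -/
def starRuns {S : Type*} (D : Set (Run S)) : Set (Run S) := ⋃ n : ℕ, iterRuns D n

theorem seqComp_mem_domain {S : Type*} (D E : Set (Run S))
    (hDpc : PrefixClosed D) (hDtot : TotalRuns D)
    (hEpc : PrefixClosed E) (hEtot : TotalRuns E) :
    PrefixClosed (seqComp D E) ∧ TotalRuns (seqComp D E) := by
  constructor
  · rintro v τ w hmem τ' w' hpre
    rcases hpre with heq | ⟨hpre, hw'⟩
    · rw [Prod.mk.injEq] at heq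
      rw [heq.1, heq.2]; exact hmem
    · simp only at hpre
      subst hw'
      rcases hmem with ⟨w0, hD, hnone⟩ | ⟨τ₁, τ₂, u, heq, hD, hE⟩
      · exact Or.inl ⟨none, hDpc v τ w0 hD τ' none (Or.inr ⟨hpre, rfl⟩), rfl⟩
      · simp only at heq hD hE
        subst heq
        rcases List.prefix_or_prefix_of_prefix hpre (List.prefix_append τ₁ τ₂) with h | ⟨t, ht⟩
        · exact Or.inl ⟨none, hDpc v τ₁ (some u) hD τ' none (Or.inr ⟨h, rfl⟩), rfl⟩
        · have htpre : t <+: τ₂ := by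
            have h2 := hpre; rw [← ht, List.prefix_append_right_inj] at h2
            exact h2
          exact Or.inr ⟨τ₁, t, u, ht.symm, hD,
            hEpc u τ₂ w hE t none (Or.inr ⟨htpre, rfl⟩)⟩
  · intro v
    exact Or.inl ⟨none, hDtot v, rfl⟩
end

section
/- The denotation ιₚ := ⊥ₚ ∪ Id, where ⊥ₚ = S × {ε} × {⊥} and Id = {(v, ε, some v) | v ∈ S}, is a two-sided neutral element of sequential composition on the computational domain: for every prefix-closed and total set of runs D, ιₚ ⋉ D = D and D ⋉ ιₚ = D. -/
theorem idP_neutral {S : Type*} (D : Set (Run S))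
    (hpc : PrefixClosed D) (htot : TotalRuns D) :
    seqComp (idP S) D = D ∧ seqComp D (idP S) = D := by
  constructor
  · ext ⟨v, τ, w⟩
    constructor
    · rintro (⟨w', ⟨h1, h2⟩, h3⟩ | ⟨τ₁, τ₂, u, hτ, ⟨h1, h2⟩, hD⟩)
      · simp only at h1 h2 h3
        subst h3; cases h1; exact htot v
      · simp only at h1 h2 hτ
        subst h1; rcases h2 with h | h
        · exact absurd h (by simp)
        · cases h; simpa [hτ] using hD
    · intro h
      right
      exact ⟨[], τ, v, rfl, ⟨rfl, Or.inr rfl⟩, h⟩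
  · ext ⟨v, τ, w⟩
    constructor
    · rintro (⟨w', h1, h2⟩ | ⟨τ₁, τ₂, u, hτ, hD, ⟨h1, h2⟩⟩)
      · simp only at h1 h2
        subst h2
        exact hpc v τ w' h1 τ none (Or.inr ⟨List.prefix_rfl, rfl⟩)
      · simp only at hτ h1 h2
        subst h1
        simp only [List.append_nil] at hτ; subst hτ
        rcases h2 with h | h
        · subst h
          exact hpc v τ (some u) hD τ none (Or.inr ⟨List.prefix_rfl, rfl⟩)
        · subst h; exact hD
    · intro h
      cases w with
      | none => exact Or.inl ⟨none, h, rfl⟩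
      | some u => exact Or.inr ⟨τ, [], u, (List.append_nil τ).symm, h, ⟨rfl, Or.inr rfl⟩⟩
end

section
/- Unrolling of semantic repetition: for every prefix-closed and total set of runs D, the Kleene star star(D) := ⋃_{n ∈ ℕ} D^n satisfies star(D) = ιₚ ∪ (D ⋉ star(D)). -/
theorem star_unroll {S : Type*} (D : Set (Run S))
    (hpc : PrefixClosed D) (htot : TotalRuns D) :
    starRuns D = idP S ∪ seqComp D (starRuns D) := by
  ext r
  constructor
  · rintro ⟨_, ⟨n, rfl⟩, hr⟩
    cases n with
    | zero => exact Or.inl hr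
    | succ n =>
      refine Or.inr ?_
      rcases hr with h | ⟨τ₁, τ₂, u, h1, h2, h3⟩
      · exact Or.inl h
      · exact Or.inr ⟨τ₁, τ₂, u, h1, h2, Set.mem_iUnion.2 ⟨n, h3⟩⟩
  · rintro (h | h | ⟨τ₁, τ₂, u, h1, h2, h3⟩)
    · exact Set.mem_iUnion.2 ⟨0, h⟩
    · exact Set.mem_iUnion.2 ⟨1, Or.inl h⟩
    · rcases Set.mem_iUnion.1 h3 with ⟨n, hn⟩
      exact Set.mem_iUnion.2 ⟨n + 1, Or.inr ⟨τ₁, τ₂, u, h1, h2, hn⟩⟩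
end

section
/- Assumption strengthening by commitments (core of axiom Aweak): let R be a set of runs that is prefix-closed in the sense that (v, τ, w) ∈ R and τ' a strict prefix of τ imply (v, τ', ⊥) ∈ R. Let A, A', C : S × Trace → Prop be predicates such that (i) for all (v, τ, w) ∈ R: if A(v, τ₀) holds for every strict prefix τ₀ of τ, then C(v, τ); and (ii) for all v and all τ₀: C(v, τ₀) ∧ A'(v, τ₀) → A(v, τ₀). Then for every run (v, τ, w) ∈ R: if A'(v, τ₀) holds for every strict prefix τ₀ of τ, then A(v, τ₀) holds for every strict prefix τ₀ of τ. -/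
theorem assumption_strengthening {S : Type*}
    (R : Set (S × Trace × Option S))
    (hpc : ∀ v τ w, (v, τ, w) ∈ R → ∀ τ' : Trace, τ' <+: τ → τ' ≠ τ →
      (v, τ', (none : Option S)) ∈ R)
    (A A' C : S × Trace → Prop)
    (h₁ : ∀ v τ w, (v, τ, w) ∈ R →
      (∀ τ₀ : Trace, τ₀ <+: τ → τ₀ ≠ τ → A (v, τ₀)) → C (v, τ))
    (h₂ : ∀ v (τ₀ : Trace), C (v, τ₀) → A' (v, τ₀) → A (v, τ₀)) :
    ∀ v τ w, (v, τ, w) ∈ R →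
      (∀ τ₀ : Trace, τ₀ <+: τ → τ₀ ≠ τ → A' (v, τ₀)) →
      (∀ τ₀ : Trace, τ₀ <+: τ → τ₀ ≠ τ → A (v, τ₀)) := by
  intro v τ w hR hA'
  have key : ∀ n (τ₀ : Trace), τ₀.length = n → τ₀ <+: τ → τ₀ ≠ τ → A (v, τ₀) := by
    intro n
    induction n using Nat.strong_induction_on with
    | _ n ih =>
      intro τ₀ hlen hpre hne
      have hmem : (v, τ₀, (none : Option S)) ∈ R := hpc v τ w hR τ₀ hpre hne
      apply h₂ v τ₀ _ (hA' τ₀ hpre hne)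
      apply h₁ v τ₀ none hmem
      intro τ₁ hpre₁ hne₁
      exact ih τ₁.length (by
        subst hlen
        exact lt_of_le_of_ne (hpre₁.length_le) (fun h => hne₁ (hpre₁.eq_of_length h)))
        τ₁ rfl (hpre₁.trans hpre)
        (fun h => hne₁ (hpre₁.eq_of_length (le_antisymm hpre₁.length_le (h ▸ hpre.length_le))))
  intro τ₀ hpre hne
  exact key τ₀.length τ₀ rfl hpre hne
end

section
/- Flattening of ac-boxes for non-communicating runs (axiom acNoCom, semantic version): let R ⊆ S × Trace × Option S be a set of runs such that every run in R has empty trace and (v, ε, ⊥) ∈ R for a fixed state v. Let A, C : Prop and ψ : S → Prop, and define AssC(τ) := (∀ τ₀, τ₀ <+: τ ∧ τ₀ ≠ τ → A) and AssP(τ) := (∀ τ₀, τ₀ <+: τ → A). Then the condition [∀ (v, τ, w) ∈ R with first component v: (AssC(τ) → C) ∧ (AssP(τ) → ∀ u, w = some u → ψ u)] is equivalent to C ∧ (A → ∀ (v, ε, some u) ∈ R, ψ u). -/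
theorem acNoCom_semantic {S : Type*} (R : Set (S × Trace × Option S)) (v : S)
    (hε : ∀ r ∈ R, r.2.1 = ([] : Trace))
    (htot : (v, ([] : Trace), (none : Option S)) ∈ R)
    (A C : Prop) (ψ : S → Prop) :
    (∀ (τ : Trace) (w : Option S), (v, τ, w) ∈ R →
        ((∀ τ₀ : Trace, τ₀ <+: τ ∧ τ₀ ≠ τ → A) → C) ∧
        ((∀ τ₀ : Trace, τ₀ <+: τ → A) → ∀ u, w = some u → ψ u)) ↔
      C ∧ (A → ∀ u : S, (v, ([] : Trace), some u) ∈ R → ψ u) := by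
  constructor
  · intro h
    refine ⟨(h [] none htot).1 ?_, fun hA u hu => (h [] (some u) hu).2 (fun _ _ => hA) u rfl⟩
    rintro τ₀ ⟨hp, hne⟩
    exact absurd (List.prefix_nil.mp hp) hne
  · rintro ⟨hC, h⟩ τ w hr
    have hτ : τ = [] := hε _ hr
    subst hτ
    refine ⟨fun _ => hC, fun hA u hw => ?_⟩
    subst hw
    exact h (hA [] (List.nil_prefix)) u hr
end
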